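/- arXiv:1407.6218 — 7 statements merged into one kernel-verified Lean document; each statement's English description precedes it below -/
import Mathlib

section
/- Let h be a Γ-equivariant continuous hermitian metric. Then there exists a continuous function ψ : G → ℝ such that h(gk)(v, v) ≤ ψ(k) · h(g)(v, v) for all g, k ∈ G and all v ∈ V. -/
open MeasureTheory

/-- A `Γ`-equivariant continuous hermitian metric on the trivial `V`-bundle over `G`:
a continuous assignment `g ↦ h g` of a hermitian inner product on `V`
(conjugate-linear in the first variable, linear in the second) satisfying
`h (γ * g) (χ γ v) (χ γ w) = h g v w`. -/
def IsEquivariantHermitianMetric {G V : Type*} [Group G] [TopologicalSpace G]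
    [NormedAddCommGroup V] [NormedSpace ℂ V]
    (Γ : Subgroup G) (χ : Γ →* (V →ₗ[ℂ] V)ˣ) (h : G → V → V → ℂ) : Prop :=
  Continuous (fun p : G × V × V => h p.1 p.2.1 p.2.2) ∧
  (∀ (g : G) (v w w' : V), h g v (w + w') = h g v w + h g v w') ∧
  (∀ (g : G) (a : ℂ) (v w : V), h g v (a • w) = a * h g v w) ∧
  (∀ (g : G) (v w : V), h g w v = (starRingEnd ℂ) (h g v w)) ∧
  (∀ (g : G) (v : V), v ≠ 0 → 0 < (h g v v).re) ∧
  (∀ (γ : Γ) (g : G) (v w : V),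
    h ((γ : G) * g) ((χ γ : V →ₗ[ℂ] V) v) ((χ γ : V →ₗ[ℂ] V) w) = h g v w)

/-!
Write `Q g v = Re h(g)(v, v)`. On the compact set `C × S`, with `C` a compact set meeting every
`Γ`-orbit and `S` the unit sphere, the ratio `Q (x * k) u / Q x u` is jointly continuous in `k` and
`(x, u)`, so its supremum over `C × S` is a continuous function `ψ k`. Homogeneity of `Q` in `v`
extends the bound `Q (x * k) v ≤ ψ k * Q x v` from `S` to all of `V`, and equivariance moves any
`g` into `C` without changing either side.
-/

open Metric

theorem exists_continuous_forall_le {X Y : Type*} [TopologicalSpace X] [CompactSpace X]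
    [TopologicalSpace Y] {F : Y → X → ℝ} (hF : Continuous ↿F) :
    ∃ ψ : Y → ℝ, Continuous ψ ∧ ∀ y x, F y x ≤ ψ y :=
  ⟨fun y => sSup (F y '' Set.univ), isCompact_univ.continuous_sSup hF, fun y x =>
    le_csSup (isCompact_univ.image (hF.uncurry_left y)).bddAbove ⟨x, trivial, rfl⟩⟩

section

variable {G V : Type*}

theorem le_mul_of_forall_mem_sphere [NormedAddCommGroup V] [NormedSpace ℝ V] {Q₁ Q₂ : V → ℝ}
    {c : ℝ} (h₁ : ∀ (r : ℝ) v, Q₁ (r • v) = r ^ 2 * Q₁ v)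
    (h₂ : ∀ (r : ℝ) v, Q₂ (r • v) = r ^ 2 * Q₂ v) (hle : ∀ u ∈ sphere (0 : V) 1, Q₁ u ≤ c * Q₂ u)
    (v : V) : Q₁ v ≤ c * Q₂ v := by
  rcases eq_or_ne v 0 with rfl | hv
  · have h₁0 : Q₁ 0 = 0 := by simpa using h₁ 0 0
    have h₂0 : Q₂ 0 = 0 := by simpa using h₂ 0 0
    rw [h₁0, h₂0, mul_zero]
  have hu : ‖v‖⁻¹ • v ∈ sphere (0 : V) 1 := by simp [norm_smul, hv]
  rw [← smul_inv_smul₀ (norm_ne_zero_iff.mpr hv) v, h₁, h₂, mul_left_comm]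
  exact mul_le_mul_of_nonneg_left (hle _ hu) (sq_nonneg _)

theorem exists_continuous_bound_of_isCompact [Group G] [TopologicalSpace G] [ContinuousMul G]
    [NormedAddCommGroup V] [NormedSpace ℝ V] [ProperSpace V] {Q : G → V → ℝ}
    (hQ : Continuous fun p : G × V => Q p.1 p.2)
    (hsmul : ∀ g (r : ℝ) v, Q g (r • v) = r ^ 2 * Q g v)
    (hpos : ∀ g v, v ≠ 0 → 0 < Q g v) {C : Set G} (hC : IsCompact C) :
    ∃ ψ : G → ℝ, Continuous ψ ∧ ∀ x ∈ C, ∀ k v, Q (x * k) v ≤ ψ k * Q x v := by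
  let K := C ×ˢ sphere (0 : V) 1
  have : CompactSpace K := isCompact_iff_compactSpace.mp (hC.prod (isCompact_sphere 0 1))
  have hQK : ∀ p : K, 0 < Q p.1.1 p.1.2 := fun p => hpos _ _ (ne_of_mem_sphere p.2.2 one_ne_zero)
  have hF : Continuous fun q : G × K => Q (q.2.1.1 * q.1) q.2.1.2 / Q q.2.1.1 q.2.1.2 :=
    (hQ.comp (by fun_prop : Continuous fun q : G × K => (q.2.1.1 * q.1, q.2.1.2))).div
      (hQ.comp (by fun_prop : Continuous fun q : G × K => q.2.1)) fun q => (hQK q.2).ne'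
  obtain ⟨ψ, hψ, hle⟩ := exists_continuous_forall_le
    (F := fun k (p : K) => Q (p.1.1 * k) p.1.2 / Q p.1.1 p.1.2) hF
  refine ⟨ψ, hψ, fun x hx k => le_mul_of_forall_mem_sphere (hsmul _) (hsmul _) fun u hu => ?_⟩
  exact (div_le_iff₀ (hQK ⟨(x, u), hx, hu⟩)).1 (hle k ⟨(x, u), hx, hu⟩)

theorem le_mul_of_invariant_of_forall_mem [Group G] {Q : G → V → ℝ} {ψ : G → ℝ} {C : Set G}
    {Γ : Subgroup G} (χ : Γ → V → V) (hQ : ∀ (γ : Γ) g v, Q (γ * g) (χ γ v) = Q g v)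
    (hcov : ∀ g, ∃ γ ∈ Γ, γ * g ∈ C) (hC : ∀ x ∈ C, ∀ k v, Q (x * k) v ≤ ψ k * Q x v)
    (g k : G) (v : V) : Q (g * k) v ≤ ψ k * Q g v := by
  obtain ⟨γ, hγ, hγg⟩ := hcov g
  rw [← hQ ⟨γ, hγ⟩ g, ← hQ ⟨γ, hγ⟩ (g * k), ← mul_assoc]
  exact hC _ hγg k _

end

namespace IsEquivariantHermitianMetric

variable {G V : Type*} [Group G] [TopologicalSpace G] [NormedAddCommGroup V] [NormedSpace ℂ V]
  {Γ : Subgroup G} {χ : Γ →* (V →ₗ[ℂ] V)ˣ} {h : G → V → V → ℂ}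

theorem apply_map (hh : IsEquivariantHermitianMetric Γ χ h) (γ : Γ) (g : G) (v w : V) :
    h (γ * g) ((χ γ : V →ₗ[ℂ] V) v) ((χ γ : V →ₗ[ℂ] V) w) = h g v w :=
  hh.2.2.2.2.2 γ g v w

theorem re_apply_self_pos (hh : IsEquivariantHermitianMetric Γ χ h) (g : G) (v : V)
    (hv : v ≠ 0) : 0 < (h g v v).re :=
  hh.2.2.2.2.1 g v hv

theorem continuous_re_apply_self (hh : IsEquivariantHermitianMetric Γ χ h) :
    Continuous fun p : G × V => (h p.1 p.2 p.2).re :=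
  Complex.continuous_re.comp
    (hh.1.comp (by fun_prop : Continuous fun p : G × V => (p.1, p.2, p.2)))

theorem re_apply_smul_self (hh : IsEquivariantHermitianMetric Γ χ h) (g : G) (r : ℝ) (v : V) :
    (h g (r • v) (r • v)).re = r ^ 2 * (h g v v).re := by
  obtain ⟨-, -, hsmul, hconj, -, -⟩ := hh
  rw [← Complex.coe_smul, hsmul, hconj g v, hsmul, map_mul, Complex.conj_ofReal,
    Complex.re_ofReal_mul, Complex.re_ofReal_mul, Complex.conj_re, ← mul_assoc, sq]

end IsEquivariantHermitianMetric

theorem exists_continuous_bound_of_equivariant_metric_general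
    {G V : Type*} [Group G] [TopologicalSpace G] [IsTopologicalGroup G]
    [NormedAddCommGroup V] [NormedSpace ℂ V] [FiniteDimensional ℂ V]
    (Γ : Subgroup G)
    (hcocompact : ∃ C : Set G, IsCompact C ∧ ∀ g : G, ∃ γ ∈ Γ, γ * g ∈ C)
    (χ : Γ →* (V →ₗ[ℂ] V)ˣ)
    (h : G → V → V → ℂ) (hh : IsEquivariantHermitianMetric Γ χ h) :
    ∃ ψ : G → ℝ, Continuous ψ ∧
      ∀ (g k : G) (v : V), (h (g * k) v v).re ≤ ψ k * (h g v v).re := by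
  obtain ⟨C, hC, hcov⟩ := hcocompact
  obtain ⟨ψ, hψ, hψC⟩ := exists_continuous_bound_of_isCompact hh.continuous_re_apply_self
    hh.re_apply_smul_self hh.re_apply_self_pos hC
  refine ⟨ψ, hψ, le_mul_of_invariant_of_forall_mem (Q := fun g v => (h g v v).re)
    (fun γ => (χ γ : V →ₗ[ℂ] V)) (fun γ g v => congrArg Complex.re (hh.apply_map γ g v v))
    hcov hψC⟩

/-- For a `Γ`-equivariant continuous hermitian metric `h` there is a
continuous function `ψ : G → ℝ` with `h (g * k) (v, v) ≤ ψ k * h g (v, v)` for all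
`g, k ∈ G` and `v ∈ V`. -/
theorem exists_continuous_bound_of_equivariant_metric
    {G V : Type*} [Group G] [TopologicalSpace G] [IsTopologicalGroup G]
    [LocallyCompactSpace G] [T2Space G] [SecondCountableTopology G]
    [MeasurableSpace G] [BorelSpace G] (μ : Measure G)
    [μ.IsHaarMeasure] [μ.IsMulRightInvariant]
    [NormedAddCommGroup V] [NormedSpace ℂ V] [FiniteDimensional ℂ V] [Nontrivial V]
    (Γ : Subgroup G) [DiscreteTopology Γ]
    (hcocompact : ∃ C : Set G, IsCompact C ∧ ∀ g : G, ∃ γ ∈ Γ, γ * g ∈ C)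
    (χ : Γ →* (V →ₗ[ℂ] V)ˣ)
    (h : G → V → V → ℂ) (hh : IsEquivariantHermitianMetric Γ χ h) :
    ∃ ψ : G → ℝ, Continuous ψ ∧
      ∀ (g k : G) (v : V), (h (g * k) v v).re ≤ ψ k * (h g v v).re :=
  exists_continuous_bound_of_equivariant_metric_general Γ hcocompact χ h hh
end

section
/- Let h be a Γ-equivariant continuous hermitian metric, let K ⊆ G be a compact subgroup and let dk denote the normalized Haar probability measure on K. Define h'(g)(v, w) := ∫_K h(gk)(v, w) dk for g ∈ G and v, w ∈ V. Then h' is again a Γ-equivariant continuous hermitian metric (in particular each h'(g) is a hermitian inner product on V), and h' is right-K-invariant: h'(gk₀)(v, w) = h'(g)(v, w) for all g ∈ G, k₀ ∈ K and v, w ∈ V. -/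
/-!
Every axiom of an equivariant hermitian metric is preserved by averaging `k ↦ h (g * k)` against
a finite nonzero measure on `K`: linearity in the second variable and conjugate symmetry by
linearity of the integral, positivity because a function with positive real part has an integral
with positive real part, and `Γ`-equivariance because `Γ` acts on the left while `K` is averaged on the right.
Continuity comes from the compactness of `K`, and right `K`-invariance is the left invariance of
the Haar measure on `K`.
-/

open MeasureTheory

/-- `x ↦ f x` is continuous into `C(Y, E)` with no local compactness of `X`, and `C(Y, E)` embeds
continuously into `L¹`. -/
theorem continuous_integral_of_continuous_uncurry {X Y E : Type*} [TopologicalSpace X]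
    [TopologicalSpace Y] [CompactSpace Y] [MeasurableSpace Y] [BorelSpace Y]
    [NormedAddCommGroup E] [NormedSpace ℝ E] [SecondCountableTopologyEither Y E]
    (ν : Measure Y) [IsFiniteMeasure ν] {f : X → Y → E} (hf : Continuous (Function.uncurry f)) :
    Continuous fun x => ∫ y, f x y ∂ν := by
  let F : C(X, C(Y, E)) := ContinuousMap.curry ⟨_, hf⟩
  have hF : ∀ x, ∫ y, f x y ∂ν = ∫ y, ContinuousMap.toLp 1 ν ℝ (F x) y ∂ν := fun x =>
    integral_congr_ae (ContinuousMap.coeFn_toLp ν (F x)).symm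
  simp only [hF]
  exact continuous_integral.comp ((ContinuousMap.toLp 1 ν ℝ).continuous.comp F.continuous)

theorem re_integral_pos_of_forall {α : Type*} [MeasurableSpace α] {μ : Measure α} [NeZero μ]
    {f : α → ℂ} (hf : Integrable f μ) (hpos : ∀ a, 0 < (f a).re) : 0 < (∫ a, f a ∂μ).re := by
  have hre : ∫ a, (f a).re ∂μ = (∫ a, f a ∂μ).re := integral_re hf
  rw [← hre, integral_pos_iff_support_of_nonneg (fun a => (hpos a).le) hf.re,
    Function.support_eq_univ fun a => (hpos a).ne']
  exact Measure.measure_univ_pos.mpr (NeZero.ne μ)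

section RightAverage

variable {G V : Type*} [Group G] [MeasurableSpace G] {K : Subgroup G} (ν : Measure K)

noncomputable def rightAverage (h : G → V → V → ℂ) : G → V → V → ℂ :=
  fun g v w => ∫ k : K, h (g * k) v w ∂ν

variable {ν}

theorem rightAverage_mul_right [MeasurableMul K] [ν.IsMulLeftInvariant] (h : G → V → V → ℂ)
    (g : G) (k₀ : K) (v w : V) : rightAverage ν h (g * k₀) v w = rightAverage ν h g v w := by
  simpa [rightAverage, mul_assoc] using integral_mul_left_eq_self (fun k : K => h (g * k) v w) k₀

theorem rightAverage_mul_left {h : G → V → V → ℂ} {a : G} {T : V → V}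
    (hT : ∀ g v w, h (a * g) (T v) (T w) = h g v w) (g : G) (v w : V) :
    rightAverage ν h (a * g) (T v) (T w) = rightAverage ν h g v w := by
  unfold rightAverage
  congr 1
  ext k
  rw [mul_assoc, hT]

theorem rightAverage_swap {h : G → V → V → ℂ}
    (hconj : ∀ g v w, h g w v = starRingEnd ℂ (h g v w)) (g : G) (v w : V) :
    rightAverage ν h g w v = starRingEnd ℂ (rightAverage ν h g v w) := by
  unfold rightAverage
  rw [← integral_conj]
  congr 1
  ext k
  exact hconj _ v w

theorem rightAverage_smul_right {h : G → V → V → ℂ} [SMul ℂ V]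
    (hsmul : ∀ g (a : ℂ) v w, h g v (a • w) = a * h g v w) (g : G) (a : ℂ) (v w : V) :
    rightAverage ν h g v (a • w) = a * rightAverage ν h g v w := by
  simp only [rightAverage, hsmul, integral_const_mul]

variable [TopologicalSpace G] [ContinuousMul G] [CompactSpace K] [BorelSpace K]
  [IsFiniteMeasure ν] [TopologicalSpace V] {h : G → V → V → ℂ}

theorem integrable_comp_mul_right (hh : Continuous fun p : G × V × V => h p.1 p.2.1 p.2.2)
    (g : G) (v w : V) : Integrable (fun k : K => h (g * k) v w) ν := by
  have hcont : Continuous fun k : K => h (g * k) v w :=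
    hh.comp (f := fun k : K => ((g * k : G), v, w)) (by fun_prop)
  exact hcont.integrable_of_hasCompactSupport (.of_compactSpace _)

theorem continuous_rightAverage (hh : Continuous fun p : G × V × V => h p.1 p.2.1 p.2.2) :
    Continuous fun p : G × V × V => rightAverage ν h p.1 p.2.1 p.2.2 :=
  continuous_integral_of_continuous_uncurry ν
    (f := fun (p : G × V × V) (k : K) => h (p.1 * k) p.2.1 p.2.2)
    (hh.comp (f := fun q : (G × V × V) × K => (q.1.1 * q.2, q.1.2)) (by fun_prop))

theorem rightAverage_add_right [Add V]
    (hh : Continuous fun p : G × V × V => h p.1 p.2.1 p.2.2)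
    (hadd : ∀ g v w w', h g v (w + w') = h g v w + h g v w') (g : G) (v w w' : V) :
    rightAverage ν h g v (w + w') = rightAverage ν h g v w + rightAverage ν h g v w' := by
  simp only [rightAverage, hadd]
  exact integral_add (integrable_comp_mul_right hh g v w) (integrable_comp_mul_right hh g v w')

theorem rightAverage_self_re_pos [NeZero ν] {v : V}
    (hh : Continuous fun p : G × V × V => h p.1 p.2.1 p.2.2) (hpos : ∀ g, 0 < (h g v v).re)
    (g : G) : 0 < (rightAverage ν h g v v).re :=
  re_integral_pos_of_forall (integrable_comp_mul_right hh g v v) fun _ => hpos _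

end RightAverage

theorem IsEquivariantHermitianMetric.rightAverage {G V : Type*} [Group G] [TopologicalSpace G]
    [ContinuousMul G] [MeasurableSpace G] [NormedAddCommGroup V] [NormedSpace ℂ V]
    {Γ : Subgroup G} {χ : Γ →* (V →ₗ[ℂ] V)ˣ} {h : G → V → V → ℂ}
    (hh : IsEquivariantHermitianMetric Γ χ h) {K : Subgroup G} [CompactSpace K] [BorelSpace K]
    (ν : Measure K) [IsFiniteMeasure ν] [NeZero ν] :
    IsEquivariantHermitianMetric Γ χ (rightAverage ν h) := by
  obtain ⟨hcont, hadd, hsmul, hconj, hpos, hequiv⟩ := hh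
  exact ⟨continuous_rightAverage hcont, rightAverage_add_right hcont hadd,
    rightAverage_smul_right hsmul, rightAverage_swap hconj,
    fun g v hv => rightAverage_self_re_pos hcont (fun g => hpos g v hv) g,
    fun γ => rightAverage_mul_left (hequiv γ)⟩

theorem average_metric_over_compact_subgroup_general
    {G V : Type*} [Group G] [TopologicalSpace G] [IsTopologicalGroup G]
    [MeasurableSpace G] [BorelSpace G]
    [NormedAddCommGroup V] [NormedSpace ℂ V]
    (Γ : Subgroup G)
    (χ : Γ →* (V →ₗ[ℂ] V)ˣ)
    (h : G → V → V → ℂ) (hh : IsEquivariantHermitianMetric Γ χ h)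
    (K : Subgroup G) (hK : IsCompact (K : Set G))
    (ν : Measure K) [ν.IsHaarMeasure] :
    IsEquivariantHermitianMetric Γ χ
      (fun g v w => ∫ k : K, h (g * (k : G)) v w ∂ν) ∧
    ∀ (g : G) (k₀ : K) (v w : V),
      (∫ k : K, h ((g * (k₀ : G)) * (k : G)) v w ∂ν) =
      (∫ k : K, h (g * (k : G)) v w ∂ν) := by
  have : CompactSpace K := isCompact_iff_compactSpace.mp hK
  have : BorelSpace K := Subtype.borelSpace _
  exact ⟨hh.rightAverage ν, rightAverage_mul_right h⟩

/-- Averaging a `Γ`-equivariant continuous hermitian metric over a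
compact subgroup `K` (with respect to the normalized Haar probability measure on `K`)
yields again a `Γ`-equivariant continuous hermitian metric, which moreover is
right-`K`-invariant. -/
theorem average_metric_over_compact_subgroup
    {G V : Type*} [Group G] [TopologicalSpace G] [IsTopologicalGroup G]
    [LocallyCompactSpace G] [T2Space G] [SecondCountableTopology G]
    [MeasurableSpace G] [BorelSpace G] (μ : Measure G)
    [μ.IsHaarMeasure] [μ.IsMulRightInvariant]
    [NormedAddCommGroup V] [NormedSpace ℂ V] [FiniteDimensional ℂ V] [Nontrivial V]
    (Γ : Subgroup G) [DiscreteTopology Γ]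
    (hcocompact : ∃ C : Set G, IsCompact C ∧ ∀ g : G, ∃ γ ∈ Γ, γ * g ∈ C)
    (χ : Γ →* (V →ₗ[ℂ] V)ˣ)
    (h : G → V → V → ℂ) (hh : IsEquivariantHermitianMetric Γ χ h)
    (K : Subgroup G) (hK : IsCompact (K : Set G))
    (ν : Measure K) [ν.IsHaarMeasure] [IsProbabilityMeasure ν] :
    IsEquivariantHermitianMetric Γ χ
      (fun g v w => ∫ k : K, h (g * (k : G)) v w ∂ν) ∧
    ∀ (g : G) (k₀ : K) (v w : V),
      (∫ k : K, h ((g * (k₀ : G)) * (k : G)) v w ∂ν) =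
      (∫ k : K, h (g * (k : G)) v w ∂ν) :=
  average_metric_over_compact_subgroup_general Γ χ h hh K hK ν
end

section
/- Let K ⊆ G be a compact subgroup and let h be a Γ-equivariant continuous hermitian metric which is right-K-invariant, i.e. h(gk)(v, w) = h(g)(v, w) for all g ∈ G, k ∈ K, v, w ∈ V. Let F ⊆ G be a measurable fundamental domain for the left translation action of Γ on G. Then for every k ∈ K and every continuous Γ-equivariant function f : G → V one has ∫_F h(x)(f(xk), f(xk)) dμ(x) = ∫_F h(x)(f(x), f(x)) dμ(x); that is, the right translation operators R(k), k ∈ K, are isometries for the L²-norm of Γ-equivariant functions. -/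
open MeasureTheory

/-
Right `K`-invariance of `h` rewrites the integrand as `φ (x k)` with `φ x = h x (f x) (f x)`,
which is `Γ`-invariant by equivariance of `f` and `h`. Right multiplication by `k` preserves `μ`
and commutes with the left action of `Γ`, so `∫_F φ (x k) = ∫_{F k} φ` and `F k` is again a
fundamental domain; integrals of `Γ`-invariant functions do not depend on the fundamental domain.
-/

open scoped Pointwise

theorem MeasureTheory.IsFundamentalDomain.setIntegral_comp_mul_right {G E : Type*} [Group G]
    [MeasurableSpace G] [MeasurableMul G] {μ : Measure G} [μ.IsMulLeftInvariant]
    [μ.IsMulRightInvariant] [NormedAddCommGroup E] [NormedSpace ℝ E] {Γ : Subgroup G} [Countable Γ]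
    {F : Set G}
    (hF : IsFundamentalDomain Γ F μ) {φ : G → E} (hφ : ∀ (γ : Γ) (x : G), φ (γ * x) = φ x)
    (k : G) : ∫ x in F, φ (x * k) ∂μ = ∫ x in F, φ x ∂μ :=
  calc ∫ x in F, φ (x * k) ∂μ = ∫ x in MulOpposite.op k • F, φ x ∂μ :=
        ((measurePreserving_smul (MulOpposite.op k) μ).setIntegral_image_emb
          (measurableEmbedding_const_smul _) φ F).symm
    _ = ∫ x in F, φ x ∂μ := (hF.smul_of_comm (MulOpposite.op k)).setIntegral_eq hF hφ

theorem IsEquivariantHermitianMetric.apply_mul_left_of_equivariant {G V : Type*} [Group G]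
    [TopologicalSpace G] [NormedAddCommGroup V] [NormedSpace ℂ V] {Γ : Subgroup G}
    {χ : Γ →* (V →ₗ[ℂ] V)ˣ} {h : G → V → V → ℂ} (hh : IsEquivariantHermitianMetric Γ χ h)
    {f : G → V} (hf : ∀ (γ : Γ) (x : G), f ((γ : G) * x) = (χ γ : V →ₗ[ℂ] V) (f x))
    (γ : Γ) (x : G) : h (γ * x) (f (γ * x)) (f (γ * x)) = h x (f x) (f x) := by
  rw [hf, hh.2.2.2.2.2]

theorem right_translation_by_compact_subgroup_isometric_general
    {G V : Type*} [Group G] [TopologicalSpace G] [IsTopologicalGroup G]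
    [SecondCountableTopology G]
    [MeasurableSpace G] [BorelSpace G] (μ : Measure G)
    [μ.IsHaarMeasure] [μ.IsMulRightInvariant]
    [NormedAddCommGroup V] [NormedSpace ℂ V]
    (Γ : Subgroup G) [DiscreteTopology Γ]
    (χ : Γ →* (V →ₗ[ℂ] V)ˣ)
    (K : Subgroup G)
    (h : G → V → V → ℂ) (hh : IsEquivariantHermitianMetric Γ χ h)
    (hKinv : ∀ (g : G), ∀ k ∈ K, ∀ (v w : V), h (g * k) v w = h g v w)
    (F : Set G) (hF : IsFundamentalDomain Γ F μ) :
    ∀ k ∈ K, ∀ f : G → V, Continuous f →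
      (∀ (γ : Γ) (x : G), f ((γ : G) * x) = (χ γ : V →ₗ[ℂ] V) (f x)) →
      (∫ x in F, (h x (f (x * k)) (f (x * k))).re ∂μ) =
        ∫ x in F, (h x (f x) (f x)).re ∂μ := by
  intro k hk f _ hf
  have : Countable Γ := TopologicalSpace.separableSpace_iff_countable.mp inferInstance
  calc ∫ x in F, (h x (f (x * k)) (f (x * k))).re ∂μ
      = ∫ x in F, (h (x * k) (f (x * k)) (f (x * k))).re ∂μ := by simp only [hKinv _ k hk]
    _ = ∫ x in F, (h x (f x) (f x)).re ∂μ :=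
        hF.setIntegral_comp_mul_right (φ := fun x => (h x (f x) (f x)).re)
          (fun γ x => by rw [hh.apply_mul_left_of_equivariant hf]) k

/-- If the `Γ`-equivariant continuous hermitian metric `h` is
right-`K`-invariant for a compact subgroup `K`, then right translation by each `k ∈ K`
is an isometry for the `L²`-norm of continuous `Γ`-equivariant functions. -/
theorem right_translation_by_compact_subgroup_isometric
    {G V : Type*} [Group G] [TopologicalSpace G] [IsTopologicalGroup G]
    [LocallyCompactSpace G] [T2Space G] [SecondCountableTopology G]
    [MeasurableSpace G] [BorelSpace G] (μ : Measure G)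
    [μ.IsHaarMeasure] [μ.IsMulRightInvariant]
    [NormedAddCommGroup V] [NormedSpace ℂ V] [FiniteDimensional ℂ V] [Nontrivial V]
    (Γ : Subgroup G) [DiscreteTopology Γ]
    (hcocompact : ∃ C : Set G, IsCompact C ∧ ∀ g : G, ∃ γ ∈ Γ, γ * g ∈ C)
    (χ : Γ →* (V →ₗ[ℂ] V)ˣ)
    (K : Subgroup G) (hK : IsCompact (K : Set G))
    (h : G → V → V → ℂ) (hh : IsEquivariantHermitianMetric Γ χ h)
    (hKinv : ∀ (g : G), ∀ k ∈ K, ∀ (v w : V), h (g * k) v w = h g v w)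
    (F : Set G) (hF : IsFundamentalDomain Γ F μ) :
    ∀ k ∈ K, ∀ f : G → V, Continuous f →
      (∀ (γ : Γ) (x : G), f ((γ : G) * x) = (χ γ : V →ₗ[ℂ] V) (f x)) →
      (∫ x in F, (h x (f (x * k)) (f (x * k))).re ∂μ) =
        ∫ x in F, (h x (f x) (f x)).re ∂μ :=
  right_translation_by_compact_subgroup_isometric_general μ Γ χ K h hh hKinv F hF
end

section
/- There exists a continuous, compactly supported function h : G → ℝ with h ≥ 0 such that for every x ∈ G the sum Σ_{γ ∈ Γ} h(γx) has only finitely many nonzero terms and equals 1. -/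
/-!
Take a Urysohn function `f ≥ 0` equal to `1` on a compact set `C` meeting every orbit. Proper
discontinuity makes its periodization `F x = ∑ γ, f (γ • x)` a locally finite sum, hence
continuous; `F` is `Γ`-invariant and `F ≥ 1` because the translates of `C` cover. Then `f / F`
is the required function.
-/

open Function Set MeasureTheory

section Periodize

variable {Γ X M : Type*} [AddCommMonoid M]

variable (Γ) in
noncomputable def periodize [TopologicalSpace M] [SMul Γ X] (f : X → M) (x : X) : M :=
  ∑' γ : Γ, f (γ • x)

theorem locallyFinite_support_comp_smul [TopologicalSpace X] [SMul Γ X]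
    [ProperlyDiscontinuousSMul Γ X] [WeaklyLocallyCompactSpace X] {f : X → M}
    (hf : HasCompactSupport f) : LocallyFinite fun γ : Γ => support fun x => f (γ • x) := by
  intro x
  obtain ⟨V, hVc, hV⟩ := exists_compact_mem_nhds x
  refine ⟨V, hV, (ProperlyDiscontinuousSMul.finite_disjoint_inter_image hVc hf).subset ?_⟩
  rintro γ ⟨y, hyγ, hyV⟩
  exact ⟨γ • y, mem_image_of_mem _ hyV, subset_tsupport f hyγ⟩

theorem finite_setOf_comp_smul_ne_zero [TopologicalSpace X] [SMul Γ X]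
    [ProperlyDiscontinuousSMul Γ X] [WeaklyLocallyCompactSpace X] {f : X → M}
    (hf : HasCompactSupport f) (x : X) : {γ : Γ | f (γ • x) ≠ 0}.Finite :=
  (locallyFinite_support_comp_smul hf).point_finite x

theorem continuous_periodize [TopologicalSpace X] [TopologicalSpace M] [ContinuousAdd M]
    [SMul Γ X] [ProperlyDiscontinuousSMul Γ X] [ContinuousConstSMul Γ X]
    [WeaklyLocallyCompactSpace X] {f : X → M}
    (hf : Continuous f) (hfc : HasCompactSupport f) : Continuous (periodize Γ f) := by
  have hfinsum : periodize Γ f = fun x => ∑ᶠ γ : Γ, f (γ • x) :=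
    funext fun x => tsum_eq_finsum (finite_setOf_comp_smul_ne_zero hfc x)
  rw [hfinsum]
  exact continuous_finsum (fun γ => hf.comp (continuous_const_smul γ))
    (locallyFinite_support_comp_smul hfc)

theorem periodize_smul [TopologicalSpace M] [Group Γ] [MulAction Γ X] (f : X → M) (γ : Γ)
    (x : X) : periodize Γ f (γ • x) = periodize Γ f x := by
  simp only [periodize, smul_smul]
  exact (Equiv.mulRight γ).tsum_eq fun δ => f (δ • x)

theorem apply_smul_le_periodize [TopologicalSpace X] [SMul Γ X]
    [ProperlyDiscontinuousSMul Γ X] [WeaklyLocallyCompactSpace X] {f : X → ℝ}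
    (hfc : HasCompactSupport f) (hf : 0 ≤ f) (γ : Γ) (x : X) :
    f (γ • x) ≤ periodize Γ f x :=
  (summable_of_hasFiniteSupport (finite_setOf_comp_smul_ne_zero hfc x)).le_tsum γ
    fun _ _ => hf _

end Periodize

theorem exists_continuous_hasCompactSupport_tsum_smul_eq_one {Γ X : Type*} [Group Γ]
    [TopologicalSpace X] [RegularSpace X] [LocallyCompactSpace X] [MulAction Γ X]
    [ProperlyDiscontinuousSMul Γ X] [ContinuousConstSMul Γ X] {C : Set X} (hC : IsCompact C)
    (hcover : ∀ x : X, ∃ γ : Γ, γ • x ∈ C) :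
    ∃ h : X → ℝ, Continuous h ∧ HasCompactSupport h ∧ (∀ x, 0 ≤ h x) ∧
      ∀ x : X, {γ : Γ | h (γ • x) ≠ 0}.Finite ∧ ∑' γ : Γ, h (γ • x) = 1 := by
  obtain ⟨f, hf1, -, hfc, hf01⟩ :=
    exists_continuous_one_zero_of_isCompact hC isClosed_empty (disjoint_empty C)
  have hf0 : 0 ≤ ⇑f := fun x => (hf01 x).1
  set F := periodize Γ f
  have hF : ∀ x, 0 < F x := fun x => by
    obtain ⟨γ, hγ⟩ := hcover x
    calc (0 : ℝ) < 1 := one_pos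
      _ = f (γ • x) := (hf1 hγ).symm
      _ ≤ F x := apply_smul_le_periodize hfc hf0 γ x
  have hhc : HasCompactSupport fun x => f x / F x :=
    hfc.mono (support_mul_subset_left f fun x => (F x)⁻¹)
  refine ⟨fun x => f x / F x, f.continuous.div (continuous_periodize f.continuous hfc)
    (fun x => (hF x).ne'), hhc, fun x => div_nonneg (hf0 x) (hF x).le,
    fun x => ⟨finite_setOf_comp_smul_ne_zero hhc x, ?_⟩⟩
  simp only [F, periodize_smul, tsum_div_const]
  exact div_self (hF x).ne'

theorem exists_partition_of_unity_for_lattice_general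
    {G : Type*} [Group G] [TopologicalSpace G] [IsTopologicalGroup G]
    [LocallyCompactSpace G] [T2Space G]
    (Γ : Subgroup G) [DiscreteTopology Γ]
    (hcocompact : ∃ C : Set G, IsCompact C ∧ ∀ g : G, ∃ γ ∈ Γ, γ * g ∈ C) :
    ∃ h : G → ℝ, Continuous h ∧ HasCompactSupport h ∧ (∀ x, 0 ≤ h x) ∧
      ∀ x : G, {γ : Γ | h ((γ : G) * x) ≠ 0}.Finite ∧
        ∑' γ : Γ, h ((γ : G) * x) = 1 := by
  obtain ⟨C, hC, hcover⟩ := hcocompact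
  have : ProperlyDiscontinuousSMul Γ G := Γ.properlyDiscontinuousSMul_of_tendsto_cofinite <|
    Γ.tendsto_coe_cofinite_of_discrete (isDiscrete_iff_discreteTopology.mpr ‹_›)
  exact exists_continuous_hasCompactSupport_tsum_smul_eq_one hC
    fun g => let ⟨γ, hγ, hγg⟩ := hcover g; ⟨⟨γ, hγ⟩, hγg⟩

/-- For a discrete cocompact subgroup `Γ` of `G` there is a continuous,
compactly supported, nonnegative function `h : G → ℝ` such that for every `x ∈ G` the
sum `Σ_{γ ∈ Γ} h (γ x)` has only finitely many nonzero terms and equals `1`. -/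
theorem exists_partition_of_unity_for_lattice
    {G : Type*} [Group G] [TopologicalSpace G] [IsTopologicalGroup G]
    [LocallyCompactSpace G] [T2Space G] [SecondCountableTopology G]
    [MeasurableSpace G] [BorelSpace G] (μ : Measure G)
    [μ.IsHaarMeasure] [μ.IsMulRightInvariant]
    (Γ : Subgroup G) [DiscreteTopology Γ]
    (hcocompact : ∃ C : Set G, IsCompact C ∧ ∀ g : G, ∃ γ ∈ Γ, γ * g ∈ C) :
    ∃ h : G → ℝ, Continuous h ∧ HasCompactSupport h ∧ (∀ x, 0 ≤ h x) ∧
      ∀ x : G, {γ : Γ | h ((γ : G) * x) ≠ 0}.Finite ∧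
        ∑' γ : Γ, h ((γ : G) * x) = 1 :=
  exists_partition_of_unity_for_lattice_general Γ hcocompact
end

section
/- Let f : G → ℂ be continuous with compact support, let φ : G → V be a continuous Γ-equivariant function, and let F ⊆ G be a measurable fundamental domain for the left translation action of Γ on G. Then for every x ∈ G, ∫_G f(y) φ(xy) dμ(y) = ∫_F k_f(x, y) φ(y) dμ(y), where k_f(x, y) = Σ_{γ ∈ Γ} f(x⁻¹ γ y) χ(γ) (a sum with only finitely many nonzero terms for each fixed x, y). That is, the operator R(f) : φ ↦ (x ↦ ∫_G f(y) φ(xy) dμ(y)) is an integral operator on Γ\G with kernel k_f. -/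
/-!
Unfold the integral over `G` along the `Γ`-translates of the fundamental domain `F`. After the
substitution `y ↦ x y`, the translate by `γ` contributes `f (x⁻¹ γ y) φ (γ y)`, which equivariance
turns into `f (x⁻¹ γ y) χ(γ) φ y`. Summation over `Γ` and integration over `F` commute because the
integrand is continuous with compact support, hence integrable: the `L¹` norms of the pieces add up
to its norm on `G`.
-/

open MeasureTheory

namespace MeasureTheory.IsFundamentalDomain

variable {G α E : Type*} [Group G] [Countable G] [MulAction G α] [MeasurableSpace α]
  [MeasurableConstSMul G α] {μ : Measure α} [SMulInvariantMeasure G α μ] {s : Set α}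
  [NormedAddCommGroup E] [NormedSpace ℝ E]

@[to_additive]
theorem integral_eq_setIntegral_tsum (h : IsFundamentalDomain G s μ) {f : α → E}
    (hf : Integrable f μ) : ∫ x, f x ∂μ = ∫ x in s, ∑' g : G, f (g • x) ∂μ := by
  have hmeas : ∀ g : G, AEStronglyMeasurable (fun x => f (g • x)) (μ.restrict s) := fun g =>
    (hf.aestronglyMeasurable.comp_quasiMeasurePreserving
      (measurePreserving_smul g μ).quasiMeasurePreserving).restrict
  have hfinite : ∑' g : G, ∫⁻ x in s, ‖f (g • x)‖ₑ ∂μ ≠ ⊤ := by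
    rw [← h.lintegral_eq_tsum'' fun x => ‖f x‖ₑ]
    exact hf.hasFiniteIntegral.ne
  rw [integral_tsum hmeas hfinite, h.integral_eq_tsum'' f hf]

end MeasureTheory.IsFundamentalDomain

theorem convolution_is_integral_operator_with_kernel_general
    {G V : Type*} [Group G] [TopologicalSpace G] [IsTopologicalGroup G]
    [SecondCountableTopology G]
    [MeasurableSpace G] [BorelSpace G] (μ : Measure G)
    [μ.IsHaarMeasure]
    [NormedAddCommGroup V] [NormedSpace ℂ V]
    (Γ : Subgroup G) [DiscreteTopology Γ]
    (χ : Γ →* (V →ₗ[ℂ] V)ˣ)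
    (f : G → ℂ) (hf : Continuous f) (hfsupp : HasCompactSupport f)
    (φ : G → V) (hφ : Continuous φ)
    (hφeq : ∀ (γ : Γ) (g : G), φ ((γ : G) * g) = (χ γ : V →ₗ[ℂ] V) (φ g))
    (F : Set G) (hF : IsFundamentalDomain Γ F μ) :
    ∀ x : G,
      (∫ y, f y • φ (x * y) ∂μ) =
        ∫ y in F, (∑' γ : Γ, f (x⁻¹ * (γ : G) * y) • (χ γ : V →ₗ[ℂ] V) (φ y)) ∂μ := by
  have : Countable Γ := countable_of_Lindelof_of_discrete
  intro x
  set H : G → V := fun y => f (x⁻¹ * y) • φ y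
  have hH : Integrable H μ :=
    ((hf.comp (continuous_const_mul x⁻¹)).smul hφ).integrable_of_hasCompactSupport
      (hfsupp.comp_homeomorph (Homeomorph.mulLeft x⁻¹)).smul_right
  calc ∫ y, f y • φ (x * y) ∂μ = ∫ y, H y ∂μ := by
        rw [← integral_mul_left_eq_self H x]
        simp only [H, inv_mul_cancel_left]
    _ = ∫ y in F, ∑' γ : Γ, H (γ • y) ∂μ := hF.integral_eq_setIntegral_tsum hH
    _ = _ := by simp only [H, Subgroup.smul_def, smul_eq_mul, hφeq, mul_assoc]

/-- For `f : G → ℂ` continuous with compact support and `φ : G → V`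
continuous and `Γ`-equivariant, and `F` a measurable fundamental domain for the left
translation action of `Γ` on `G`, the operator `R(f)` is an integral operator with
kernel `k_f (x, y) = Σ_{γ ∈ Γ} f (x⁻¹ γ y) χ(γ)`:
`∫_G f y • φ (x y) dμ y = ∫_F k_f (x, y) (φ y) dμ y` for every `x ∈ G`. -/
theorem convolution_is_integral_operator_with_kernel
    {G V : Type*} [Group G] [TopologicalSpace G] [IsTopologicalGroup G]
    [LocallyCompactSpace G] [T2Space G] [SecondCountableTopology G]
    [MeasurableSpace G] [BorelSpace G] (μ : Measure G)
    [μ.IsHaarMeasure] [μ.IsMulRightInvariant]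
    [NormedAddCommGroup V] [NormedSpace ℂ V] [FiniteDimensional ℂ V] [Nontrivial V]
    (Γ : Subgroup G) [DiscreteTopology Γ]
    (hcocompact : ∃ C : Set G, IsCompact C ∧ ∀ g : G, ∃ γ ∈ Γ, γ * g ∈ C)
    (χ : Γ →* (V →ₗ[ℂ] V)ˣ)
    (f : G → ℂ) (hf : Continuous f) (hfsupp : HasCompactSupport f)
    (φ : G → V) (hφ : Continuous φ)
    (hφeq : ∀ (γ : Γ) (g : G), φ ((γ : G) * g) = (χ γ : V →ₗ[ℂ] V) (φ g))
    (F : Set G) (hF : IsFundamentalDomain Γ F μ) :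
    ∀ x : G,
      (∫ y, f y • φ (x * y) ∂μ) =
        ∫ y in F, (∑' γ : Γ, f (x⁻¹ * (γ : G) * y) • (χ γ : V →ₗ[ℂ] V) (φ y)) ∂μ :=
  convolution_is_integral_operator_with_kernel_general μ Γ χ f hf hfsupp φ hφ hφeq F hF
end

section
/- Let f : G → ℂ be continuous with compact support, and let F ⊆ G be a measurable fundamental domain with compact closure for the left translation action of Γ on G. For γ ∈ Γ let Γ_γ denote the centralizer of γ in Γ, and let F_γ ⊆ G be a measurable fundamental domain for the left translation action of Γ_γ on G. Then only finitely many conjugacy classes [γ] of Γ contribute, and ∫_F ( Σ_{γ ∈ Γ} f(x⁻¹ γ x) · tr χ(γ) ) dμ(x) = Σ_{[γ]} tr χ(γ) · ∫_{F_γ} f(x⁻¹ γ x) dμ(x), where the sum on the right runs over a set of representatives γ of the conjugacy classes of Γ. (Here tr χ(γ) depends only on the conjugacy class of γ, the function x ↦ f(x⁻¹ γ x) is invariant under left translation of x by elements of Γ_γ, so the integral over F_γ is independent of the choice of F_γ, and all sums and integrals occurring converge absolutely.) -/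
/-!
Write `γ = τ σ τ⁻¹` with `σ` running over the representatives `S` and `τ` over `Γ / Γ_σ`; this
reindexes `Γ` by the pairs `(σ, τ Γ_σ)`. Since `tr χ` is a class function and
`∫_F f (x⁻¹ τ σ τ⁻¹ x) dx = ∫_{τ⁻¹ F} f (x⁻¹ σ x) dx`, the class of `σ` contributes
`tr χ(σ) · ∑_τ ∫_{τ⁻¹ F} f (x⁻¹ σ x) dx`, and the translates `τ⁻¹ F` tile a fundamental domain of
`Γ_σ`, on which the integral of the `Γ_σ`-invariant function `x ↦ f (x⁻¹ σ x)` equals the one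
over `F_σ`. Every sum is finite: `x⁻¹ γ x ∈ supp f` with `x` in a compact set `A` forces `γ` into
the compact set `A · supp f · A⁻¹`, which meets the discrete group `Γ` in finitely many points.
-/

open MeasureTheory Set Function Pointwise

theorem Subgroup.finite_preimage_coe_of_isCompact {G : Type*} [Group G] [TopologicalSpace G]
    [IsTopologicalGroup G] [T2Space G] (Γ : Subgroup G) [DiscreteTopology Γ] {C : Set G}
    (hC : IsCompact C) : ((↑) ⁻¹' C : Set Γ).Finite :=
  (Γ.isClosed_of_discrete.isClosedEmbedding_subtypeVal.isCompact_preimage hC).finite_of_discrete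

section Conjugation

variable {G : Type*} [Group G]

theorem mem_mul_mul_inv_of_inv_mul_mul_mem {A K : Set G} {x g : G} (hx : x ∈ A)
    (hg : x⁻¹ * g * x ∈ K) : g ∈ A * K * A⁻¹ := by
  have := Set.mul_mem_mul (Set.mul_mem_mul hx hg) (Set.inv_mem_inv.mpr hx)
  rwa [show x * (x⁻¹ * g * x) * x⁻¹ = g by group] at this

noncomputable def conjOfCoset (σ : G) (q : G ⧸ Subgroup.centralizer {σ}) : G :=
  q.out * σ * q.out⁻¹

theorem isConj_conjOfCoset (σ : G) (q : G ⧸ Subgroup.centralizer {σ}) :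
    IsConj σ (conjOfCoset σ q) :=
  isConj_iff.mpr ⟨q.out, rfl⟩

theorem conjOfCoset_mk (σ c : G) :
    conjOfCoset σ (c : G ⧸ Subgroup.centralizer {σ}) = c * σ * c⁻¹ := by
  obtain ⟨z, hz⟩ := QuotientGroup.mk_out_eq_mul (Subgroup.centralizer {σ}) c
  have hcomm : (z : G) * σ = σ * z := Subgroup.mem_centralizer_singleton_iff.mp z.2
  rw [conjOfCoset, hz, mul_assoc c, hcomm]
  group

theorem conjOfCoset_injective (σ : G) : Injective (conjOfCoset σ) := by
  intro q₁ q₂ h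
  rw [← QuotientGroup.out_eq' q₁, ← QuotientGroup.out_eq' q₂, QuotientGroup.eq,
    Subgroup.mem_centralizer_singleton_iff]
  calc q₁.out⁻¹ * q₂.out * σ = q₁.out⁻¹ * conjOfCoset σ q₂ * q₂.out := by
        rw [conjOfCoset]; group
    _ = σ * (q₁.out⁻¹ * q₂.out) := by rw [← h, conjOfCoset]; group

theorem bijective_sigma_conjOfCoset {S : Set G} (hS : ∀ δ : G, ∃! σ, σ ∈ S ∧ IsConj σ δ) :
    Bijective fun p : Σ σ : S, G ⧸ Subgroup.centralizer {(σ : G)} => conjOfCoset (p.1 : G) p.2 := by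
  constructor
  · rintro ⟨⟨σ₁, h₁⟩, q₁⟩ ⟨⟨σ₂, h₂⟩, q₂⟩ h
    dsimp only at h
    obtain rfl : σ₁ = σ₂ :=
      (hS _).unique ⟨h₁, isConj_conjOfCoset σ₁ q₁⟩ ⟨h₂, h ▸ isConj_conjOfCoset σ₂ q₂⟩
    rw [conjOfCoset_injective σ₁ h]
  · intro δ
    obtain ⟨σ, ⟨hσ, hconj⟩, -⟩ := hS δ
    obtain ⟨c, rfl⟩ := isConj_iff.mp hconj
    exact ⟨⟨⟨σ, hσ⟩, c⟩, conjOfCoset_mk σ c⟩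

theorem finite_setOf_mem_and_exists_isConj_mem {S N : Set G}
    (hS : ∀ δ : G, ∃! σ, σ ∈ S ∧ IsConj σ δ) (hN : N.Finite) :
    {σ | σ ∈ S ∧ ∃ γ ∈ N, IsConj σ γ}.Finite := by
  refine Set.Finite.of_finite_image (f := ConjClasses.mk) ((hN.image ConjClasses.mk).subset ?_) ?_
  · rintro _ ⟨σ, ⟨-, γ, hγ, hσγ⟩, rfl⟩
    exact ⟨γ, hγ, ConjClasses.mk_eq_mk_iff_isConj.mpr hσγ.symm⟩
  · rintro σ₁ ⟨h₁, -⟩ σ₂ ⟨h₂, -⟩ h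
    exact (hS σ₂).unique ⟨h₁, ConjClasses.mk_eq_mk_iff_isConj.mp h⟩ ⟨h₂, IsConj.refl σ₂⟩

theorem trace_map_conj {R M : Type*} [CommRing R] [AddCommGroup M] [Module R M]
    (χ : G →* (M →ₗ[R] M)ˣ) (τ σ : G) :
    LinearMap.trace R M (χ (τ * σ * τ⁻¹) : M →ₗ[R] M) = LinearMap.trace R M (χ σ : M →ₗ[R] M) := by
  simp only [map_mul, map_inv, Units.val_mul, LinearMap.trace_conj]

end Conjugation

theorem hasSum_setIntegral_of_forall_notMem_eq_zero {ι X E : Type*} [MeasurableSpace X]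
    [NormedAddCommGroup E] [NormedSpace ℝ E] {μ : Measure X} {s : Set X}
    (hs : NullMeasurableSet s μ) {g : ι → X → E} (T : Finset ι)
    (hT : ∀ i ∉ T, ∀ x ∈ s, g i x = 0) (hg : ∀ i ∈ T, IntegrableOn (g i) s μ) :
    HasSum (fun i => ∫ x in s, g i x ∂μ) (∫ x in s, ∑' i, g i x ∂μ) := by
  rw [setIntegral_congr_fun₀ hs fun x hx => tsum_eq_sum fun i hi => hT i hi x hx,
    integral_finsetSum T hg]
  exact hasSum_sum_of_ne_finset_zero fun i hi => setIntegral_eq_zero_of_forall_eq_zero (hT i hi)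

theorem Continuous.integrableOn_of_isCompact_closure {X E : Type*} [TopologicalSpace X]
    [T2Space X] [MeasurableSpace X] [OpensMeasurableSpace X] {μ : Measure X}
    [IsFiniteMeasureOnCompacts μ] [NormedAddCommGroup E] {φ : X → E} (hφ : Continuous φ)
    {s : Set X} (hs : IsCompact (closure s)) : IntegrableOn φ s μ :=
  (hφ.continuousOn.integrableOn_compact hs).mono_set subset_closure

namespace MeasureTheory.IsFundamentalDomain

variable {Γ α : Type*} [Group Γ] [MulAction Γ α] [MeasurableSpace α] {μ : Measure α}

theorem of_map_subtype {G : Type*} [Group G] [MulAction G α] {Γ : Subgroup G} {H : Subgroup Γ}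
    {t : Set α} (ht : IsFundamentalDomain (H.map Γ.subtype) t μ) : IsFundamentalDomain H t μ := by
  simpa using ht.image_of_equiv (Equiv.refl α) (.id μ)
    (H.equivMapOfInjective Γ.subtype Γ.subtype_injective).toEquiv fun _ _ => rfl

variable [MeasurableConstSMul Γ α] [SMulInvariantMeasure Γ α μ] [Countable Γ] {F : Set α}

theorem iUnion_out_inv_smul (hF : IsFundamentalDomain Γ F μ) (H : Subgroup Γ) :
    IsFundamentalDomain H (⋃ q : Γ ⧸ H, q.out⁻¹ • F) μ := by
  have : Countable (Γ ⧸ H) := Quotient.countable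
  refine ⟨.iUnion fun q => hF.nullMeasurableSet_smul _, ?_, ?_⟩
  · filter_upwards [hF.ae_covers] with x ⟨γ, hγ⟩
    obtain ⟨h, hh⟩ := QuotientGroup.mk_out_eq_mul H γ
    refine ⟨h⁻¹, mem_iUnion.mpr ⟨γ, ?_⟩⟩
    rw [mem_smul_set_iff_inv_smul_mem, inv_inv, hh, Subgroup.smul_def, smul_smul]
    simpa using hγ
  · intro h₁ h₂ hne
    simp only [onFun, smul_set_iUnion, ← smul_assoc, AEDisjoint.iUnion_left_iff,
      AEDisjoint.iUnion_right_iff]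
    intro q₂ q₁
    refine hF.aedisjoint fun heq => hne ?_
    rw [Subgroup.smul_def, Subgroup.smul_def, smul_eq_mul, smul_eq_mul] at heq
    obtain rfl : q₁ = q₂ := by
      rw [← QuotientGroup.out_eq' q₁, ← QuotientGroup.out_eq' q₂, QuotientGroup.eq]
      convert (h₁⁻¹ * h₂).2 using 1
      calc q₁.out⁻¹ * q₂.out = (h₁ : Γ)⁻¹ * (h₁ * q₁.out⁻¹) * q₂.out := by group
        _ = (h₁ : Γ)⁻¹ * (h₂ * q₂.out⁻¹) * q₂.out := by rw [heq]
        _ = ((h₁⁻¹ * h₂ : H) : Γ) := by push_cast; group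
    exact Subtype.ext (mul_right_cancel heq)

theorem setIntegral_eq_tsum_quotient {E : Type*} [NormedAddCommGroup E] [NormedSpace ℝ E]
    (hF : IsFundamentalDomain Γ F μ) {H : Subgroup Γ} {t : Set α}
    (ht : IsFundamentalDomain H t μ) {φ : α → E} (hφ_inv : ∀ (h : H) (x : α), φ (h • x) = φ x)
    (hφ_int : ∀ γ : Γ, IntegrableOn φ (γ • F) μ)
    (hφ_fin : {q : Γ ⧸ H | ∃ x ∈ F, φ (q.out⁻¹ • x) ≠ 0}.Finite) :
    ∫ x in t, φ x ∂μ = ∑' q : Γ ⧸ H, ∫ x in F, φ (q.out⁻¹ • x) ∂μ := by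
  have : Countable (Γ ⧸ H) := Quotient.countable
  have : SMulInvariantMeasure H α μ :=
    ⟨fun h _ hs => SMulInvariantMeasure.measure_preimage_smul (h : Γ) hs⟩
  have hD := hF.iUnion_out_inv_smul H
  have hφ_zero : ∀ x ∈ (⋃ q : Γ ⧸ H, q.out⁻¹ • F) \ ⋃ q ∈ hφ_fin.toFinset, q.out⁻¹ • F,
      φ x = 0 := by
    rintro _ ⟨hxD, hxT⟩
    obtain ⟨q, y, hy, rfl⟩ := mem_iUnion.mp hxD
    by_contra h
    exact hxT (mem_iUnion₂.mpr ⟨q, hφ_fin.mem_toFinset.mpr ⟨y, hy, h⟩, y, hy, rfl⟩)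
  have hφ_intD : IntegrableOn φ (⋃ q : Γ ⧸ H, q.out⁻¹ • F) μ :=
    (integrableOn_finset_iUnion.mpr fun q _ => hφ_int _).of_ae_sdiff_eq_zero hD.nullMeasurableSet
      (ae_of_all _ hφ_zero)
  rw [ht.setIntegral_eq hD hφ_inv, integral_iUnion_ae (s := fun q : Γ ⧸ H => q.out⁻¹ • F)
    (fun q => hF.nullMeasurableSet_smul _)
    (fun q₁ q₂ hq => hF.aedisjoint fun h => hq (Quotient.out_injective (inv_injective h))) hφ_intD]
  exact tsum_congr fun q =>
    (measurePreserving_smul _ μ).setIntegral_image_emb (measurableEmbedding_const_smul _) _ _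

end MeasureTheory.IsFundamentalDomain

section DiscreteSubgroup

variable {G : Type*} [Group G] [TopologicalSpace G] [IsTopologicalGroup G] [T2Space G]
  (Γ : Subgroup G) [DiscreteTopology Γ]

theorem finite_setOf_exists_mem_conj_ne_zero {M : Type*} [Zero M] {f : G → M}
    (hf : HasCompactSupport f) {A : Set G} (hA : IsCompact (closure A)) :
    {γ : Γ | ∃ x ∈ A, f (x⁻¹ * γ * x) ≠ 0}.Finite :=
  (Γ.finite_preimage_coe_of_isCompact ((hA.mul hf).mul hA.inv)).subset fun _ ⟨_, hx, hfx⟩ =>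
    mem_mul_mul_inv_of_inv_mul_mul_mem (subset_closure hx) (subset_tsupport f hfx)

theorem finite_setOf_mem_and_exists_conj_ne_zero {M : Type*} [Zero M] {f : G → M}
    (hf : HasCompactSupport f)
    (hcocompact : ∃ C : Set G, IsCompact C ∧ ∀ g : G, ∃ γ ∈ Γ, γ * g ∈ C)
    {S : Set Γ} (hS : ∀ δ : Γ, ∃! σ, σ ∈ S ∧ IsConj σ δ) :
    {σ : Γ | σ ∈ S ∧ ∃ x : G, f (x⁻¹ * σ * x) ≠ 0}.Finite := by
  obtain ⟨C, hC, hcover⟩ := hcocompact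
  refine (finite_setOf_mem_and_exists_isConj_mem hS
    (finite_setOf_exists_mem_conj_ne_zero Γ hf hC.closure)).subset ?_
  rintro σ ⟨hσ, x, hx⟩
  obtain ⟨γ, hγ, hγx⟩ := hcover x
  refine ⟨hσ, ⟨γ, hγ⟩ * σ * ⟨γ, hγ⟩⁻¹, ⟨γ * x, hγx, ?_⟩, isConj_iff.mpr ⟨_, rfl⟩⟩
  convert hx using 2
  push_cast
  group

variable [MeasurableSpace G] [BorelSpace G] {μ : Measure G} [μ.IsMulLeftInvariant]
  [IsFiniteMeasureOnCompacts μ] [Countable Γ] {E : Type*} [NormedAddCommGroup E] [NormedSpace ℝ E]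

theorem setIntegral_conj_eq_tsum_conjOfCoset {F : Set G} (hF : IsFundamentalDomain Γ F μ)
    (hFc : IsCompact (closure F)) {f : G → E} (hf : Continuous f) (hfsupp : HasCompactSupport f)
    (σ : Γ) {t : Set G}
    (ht : IsFundamentalDomain ((Subgroup.centralizer {σ}).map Γ.subtype) t μ) :
    ∫ x in t, f (x⁻¹ * σ * x) ∂μ = ∑' q : Γ ⧸ Subgroup.centralizer {σ},
      ∫ x in F, f (x⁻¹ * ((conjOfCoset σ q : Γ) : G) * x) ∂μ := by
  have hconj : ∀ (τ : Γ) (x : G),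
      (((τ⁻¹ : Γ) : G) * x)⁻¹ * σ * ((τ⁻¹ : Γ) * x) = x⁻¹ * ((τ * σ * τ⁻¹ : Γ) : G) * x := by
    intro τ x
    push_cast
    group
  have := hF.setIntegral_eq_tsum_quotient ht.of_map_subtype (φ := fun x => f (x⁻¹ * σ * x)) ?_ ?_ ?_
  · simpa only [conjOfCoset, Subgroup.smul_def, smul_eq_mul, hconj] using this
  · rintro ⟨h, hh⟩ x
    have hcomm : (h : G) * σ = σ * h :=
      congrArg Subtype.val (Subgroup.mem_centralizer_singleton_iff.mp hh)
    show f ((h * x)⁻¹ * σ * (h * x)) = f (x⁻¹ * σ * x)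
    rw [show ((h : G) * x)⁻¹ * σ * (h * x) = x⁻¹ * ((h : G)⁻¹ * (σ * h)) * x by group, ← hcomm,
      inv_mul_cancel_left]
  · intro γ
    refine Continuous.integrableOn_of_isCompact_closure (by fun_prop) ?_
    rw [closure_smul]
    exact hFc.smul _
  · refine ((finite_setOf_exists_mem_conj_ne_zero Γ hfsupp hFc).preimage
      (conjOfCoset_injective σ).injOn).subset ?_
    rintro q ⟨x, hx, hfx⟩
    refine ⟨x, hx, ?_⟩
    simpa only [conjOfCoset, Subgroup.smul_def, smul_eq_mul, hconj] using hfx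

end DiscreteSubgroup

theorem geometric_side_of_trace_formula_general
    {G V : Type*} [Group G] [TopologicalSpace G] [IsTopologicalGroup G]
    [T2Space G] [SecondCountableTopology G]
    [MeasurableSpace G] [BorelSpace G] (μ : Measure G)
    [μ.IsHaarMeasure]
    [NormedAddCommGroup V] [NormedSpace ℂ V]
    (Γ : Subgroup G) [DiscreteTopology Γ]
    (hcocompact : ∃ C : Set G, IsCompact C ∧ ∀ g : G, ∃ γ ∈ Γ, γ * g ∈ C)
    (χ : Γ →* (V →ₗ[ℂ] V)ˣ)
    (f : G → ℂ) (hf : Continuous f) (hfsupp : HasCompactSupport f)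
    (F : Set G) (hF : IsFundamentalDomain Γ F μ) (hFc : IsCompact (closure F))
    (S : Set Γ) (hS : ∀ δ : Γ, ∃! σ, σ ∈ S ∧ IsConj σ δ)
    (Fc : Γ → Set G)
    (hFc' : ∀ γ : Γ,
      IsFundamentalDomain ((Subgroup.centralizer {γ}).map Γ.subtype) (Fc γ) μ) :
    {σ : Γ | σ ∈ S ∧ ∃ x : G, f (x⁻¹ * (σ : G) * x) ≠ 0}.Finite ∧
    (∫ x in F,
        (∑' γ : Γ, f (x⁻¹ * (γ : G) * x) * LinearMap.trace ℂ V (χ γ : V →ₗ[ℂ] V)) ∂μ) =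
      ∑' σ : S, LinearMap.trace ℂ V (χ (σ : Γ) : V →ₗ[ℂ] V) *
        ∫ x in Fc (σ : Γ), f (x⁻¹ * ((σ : Γ) : G) * x) ∂μ := by
  have : Countable Γ := TopologicalSpace.separableSpace_iff_countable.mp inferInstance
  refine ⟨finite_setOf_mem_and_exists_conj_ne_zero Γ hfsupp hcocompact hS, ?_⟩
  have hfin := finite_setOf_exists_mem_conj_ne_zero Γ hfsupp hFc
  have hLHS := hasSum_setIntegral_of_forall_notMem_eq_zero hF.nullMeasurableSet hfin.toFinset
    (g := fun (γ : Γ) x => f (x⁻¹ * γ * x) * LinearMap.trace ℂ V (χ γ : V →ₗ[ℂ] V))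
    (fun γ hγ x hx => by_contra fun h => hγ (hfin.mem_toFinset.mpr ⟨x, hx, left_ne_zero_of_mul h⟩))
    (fun γ _ => Continuous.integrableOn_of_isCompact_closure (by fun_prop) hFc)
  let e := Equiv.ofBijective _ (bijective_sigma_conjOfCoset hS)
  rw [← hLHS.tsum_eq, ← e.tsum_eq, Summable.tsum_sigma (by exact e.summable_iff.mpr hLHS.summable)]
  refine tsum_congr fun σ => ?_
  rw [setIntegral_conj_eq_tsum_conjOfCoset Γ hF hFc hf hfsupp σ (hFc' σ), ← tsum_mul_left]
  refine tsum_congr fun q => ?_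
  rw [integral_mul_const, mul_comm]
  simp only [e, Equiv.ofBijective_apply, conjOfCoset, trace_map_conj]

/-- Geometric side of the trace formula: for `f : G → ℂ` continuous
with compact support, a fundamental domain `F` with compact closure for `Γ`, a set `S`
of representatives of the conjugacy classes of `Γ`, and fundamental domains `F_γ` for
the centralizers `Γ_γ`, only finitely many conjugacy classes contribute and
`∫_F Σ_{γ ∈ Γ} f (x⁻¹ γ x) tr χ(γ) dμ x
  = Σ_{[γ]} tr χ(γ) ∫_{F_γ} f (x⁻¹ γ x) dμ x`. -/
theorem geometric_side_of_trace_formula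
    {G V : Type*} [Group G] [TopologicalSpace G] [IsTopologicalGroup G]
    [LocallyCompactSpace G] [T2Space G] [SecondCountableTopology G]
    [MeasurableSpace G] [BorelSpace G] (μ : Measure G)
    [μ.IsHaarMeasure] [μ.IsMulRightInvariant]
    [NormedAddCommGroup V] [NormedSpace ℂ V] [FiniteDimensional ℂ V] [Nontrivial V]
    (Γ : Subgroup G) [DiscreteTopology Γ]
    (hcocompact : ∃ C : Set G, IsCompact C ∧ ∀ g : G, ∃ γ ∈ Γ, γ * g ∈ C)
    (χ : Γ →* (V →ₗ[ℂ] V)ˣ)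
    (f : G → ℂ) (hf : Continuous f) (hfsupp : HasCompactSupport f)
    (F : Set G) (hF : IsFundamentalDomain Γ F μ) (hFc : IsCompact (closure F))
    (S : Set Γ) (hS : ∀ δ : Γ, ∃! σ, σ ∈ S ∧ IsConj σ δ)
    (Fc : Γ → Set G)
    (hFc' : ∀ γ : Γ,
      IsFundamentalDomain ((Subgroup.centralizer {γ}).map Γ.subtype) (Fc γ) μ) :
    {σ : Γ | σ ∈ S ∧ ∃ x : G, f (x⁻¹ * (σ : G) * x) ≠ 0}.Finite ∧
    (∫ x in F,
        (∑' γ : Γ, f (x⁻¹ * (γ : G) * x) * LinearMap.trace ℂ V (χ γ : V →ₗ[ℂ] V)) ∂μ) =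
      ∑' σ : S, LinearMap.trace ℂ V (χ (σ : Γ) : V →ₗ[ℂ] V) *
        ∫ x in Fc (σ : Γ), f (x⁻¹ * ((σ : Γ) : G) * x) ∂μ :=
  geometric_side_of_trace_formula_general μ Γ hcocompact χ f hf hfsupp F hF hFc S hS Fc hFc'
end

section
/- Let f : G → ℂ be continuous with compact support and let h : G → ℝ be continuous, compactly supported, with h ≥ 0 and Σ_{γ ∈ Γ} h(γx) = 1 for all x ∈ G. Fix γ ∈ Γ, let Γ_γ be the centralizer of γ in Γ, and let F_γ ⊆ G be a measurable fundamental domain for the left translation action of Γ_γ on G. Then, summing over a set S of representatives σ of the right cosets Γ_γ\Γ, one has Σ_{σ ∈ S} ∫_G h(σ⁻¹ x) f(x⁻¹ γ x) dμ(x) = ∫_{F_γ} f(x⁻¹ γ x) dμ(x), and consequently Σ_{γ' ∈ [γ]} ∫_G h(x) f(x⁻¹ γ' x) dμ(x) = ∫_{F_γ} f(x⁻¹ γ x) dμ(x), where [γ] denotes the conjugacy class of γ in Γ and all sums and integrals converge absolutely. -/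
open MeasureTheory
open scoped Pointwise ENNReal NNReal

/-- Coset unfolding for a single conjugacy class: with a partition of
unity `h` for `Γ\G`, a fixed `γ ∈ Γ` with centralizer `Γ_γ`, a fundamental domain
`F_γ` for `Γ_γ`, and a set `S` of representatives of the right cosets `Γ_γ\Γ`,
`Σ_{σ ∈ S} ∫_G h (σ⁻¹ x) f (x⁻¹ γ x) dμ x = ∫_{F_γ} f (x⁻¹ γ x) dμ x`, and
consequently `Σ_{γ' ∈ [γ]} ∫_G h x f (x⁻¹ γ' x) dμ x = ∫_{F_γ} f (x⁻¹ γ x) dμ x`,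
all sums and integrals converging absolutely. -/
theorem coset_unfolding_single_conjugacy_class
    {G : Type*} [Group G] [TopologicalSpace G] [IsTopologicalGroup G]
    [LocallyCompactSpace G] [T2Space G] [SecondCountableTopology G]
    [MeasurableSpace G] [BorelSpace G] (μ : Measure G)
    [μ.IsHaarMeasure] [μ.IsMulRightInvariant]
    (Γ : Subgroup G) [DiscreteTopology Γ]
    (hcocompact : ∃ C : Set G, IsCompact C ∧ ∀ g : G, ∃ γ ∈ Γ, γ * g ∈ C)
    (f : G → ℂ) (hf : Continuous f) (hfsupp : HasCompactSupport f)
    (h : G → ℝ) (hh : Continuous h) (hhsupp : HasCompactSupport h)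
    (hhnonneg : ∀ x, 0 ≤ h x)
    (hhsum : ∀ x : G, {γ : Γ | h ((γ : G) * x) ≠ 0}.Finite ∧
      ∑' γ : Γ, h ((γ : G) * x) = 1)
    (γ : Γ)
    (Fγ : Set G)
    (hFγ : IsFundamentalDomain ((Subgroup.centralizer {γ}).map Γ.subtype) Fγ μ)
    (S : Set Γ)
    (hS : ∀ δ : Γ, ∃! σ, σ ∈ S ∧ σ * δ⁻¹ ∈ Subgroup.centralizer {γ}) :
    (∀ σ : Γ, Integrable
      (fun x : G => (h (((σ : G))⁻¹ * x) : ℂ) * f (x⁻¹ * (γ : G) * x)) μ) ∧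
    Summable (fun σ : S => ∫ x, ‖
      ((h ((((σ : Γ) : G))⁻¹ * x) : ℂ) * f (x⁻¹ * (γ : G) * x))‖ ∂μ) ∧
    (∑' σ : S, ∫ x,
        (h ((((σ : Γ) : G))⁻¹ * x) : ℂ) * f (x⁻¹ * (γ : G) * x) ∂μ) =
      ∫ x in Fγ, f (x⁻¹ * (γ : G) * x) ∂μ ∧
    Summable (fun δ : {δ : Γ // IsConj γ δ} => ∫ x, ‖
      ((h x : ℂ) * f (x⁻¹ * ((δ : Γ) : G) * x))‖ ∂μ) ∧
    (∑' δ : {δ : Γ // IsConj γ δ}, ∫ x,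
        (h x : ℂ) * f (x⁻¹ * ((δ : Γ) : G) * x) ∂μ) =
      ∫ x in Fγ, f (x⁻¹ * (γ : G) * x) ∂μ := by
  classical
  haveI cΓ : Countable Γ := TopologicalSpace.separableSpace_iff_countable.mp inferInstance
  set Cγ : Subgroup Γ := Subgroup.centralizer {γ} with hCγdef
  set Hγ : Subgroup G := Cγ.map Γ.subtype with hHγdef
  let eH : Cγ ≃* Hγ := Cγ.equivMapOfInjective Γ.subtype Γ.subtype_injective
  have hcoeH : ∀ c : Cγ, ((eH.toEquiv c : Hγ) : G) = (((c : Γ) : G)) := fun c => by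
    show ((Cγ.equivMapOfInjective Γ.subtype Γ.subtype_injective c : _) : G) = _
    rw [Subgroup.coe_equivMapOfInjective_apply]
    rfl
  haveI cH : Countable Hγ := Countable.of_equiv Cγ eH.toEquiv
  set F : G → ℂ := fun x => f (x⁻¹ * (γ : G) * x) with hFdef
  have hFcont : Continuous F := by
    apply hf.comp
    exact (continuous_inv.mul continuous_const).mul continuous_id
  set Φ : Γ → G → ℂ := fun σ x => (h (((σ : G))⁻¹ * x) : ℂ) * F x with hΦdef
  -- Basic integrability
  have hPhiInt : ∀ σ : Γ, Integrable (Φ σ) μ := by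
    intro σ
    have hc : Continuous (Φ σ) := by
      apply Continuous.mul _ hFcont
      exact Complex.continuous_ofReal.comp (hh.comp (continuous_const.mul continuous_id))
    have h1 : HasCompactSupport fun x : G => h (((σ : G))⁻¹ * x) :=
      hhsupp.comp_homeomorph (Homeomorph.mulLeft ((σ : G))⁻¹)
    have h2 : HasCompactSupport fun x : G => ((h (((σ : G))⁻¹ * x) : ℝ) : ℂ) :=
      h1.comp_left (g := Complex.ofReal) Complex.ofReal_zero
    exact hc.integrable_of_hasCompactSupport h2.mul_right
  -- invariance of F under the centralizer
  have hFc : ∀ g ∈ Hγ, ∀ x : G, F (g * x) = F x := by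
    intro g hg x
    obtain ⟨c, hc, rfl⟩ := Subgroup.mem_map.mp hg
    have hc' : c * γ = γ * c := Subgroup.mem_centralizer_singleton_iff.mp hc
    have hcomm : (c : G) * (γ : G) = (γ : G) * (c : G) := by
      have := congrArg (fun t : Γ => (t : G)) hc'
      simpa using this
    have key : ((c : G))⁻¹ * (γ : G) * (c : G) = (γ : G) := by
      rw [mul_assoc, ← hcomm, inv_mul_cancel_left]
    simp only [hFdef, Subgroup.coe_subtype]
    have hgr : ((c : G) * x)⁻¹ * (γ : G) * ((c : G) * x)
        = x⁻¹ * (((c : G))⁻¹ * (γ : G) * (c : G)) * x := by group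
    rw [hgr, key]
  have ΦC : ∀ (c : Cγ) (σ : Γ) (x : G),
      Φ σ ((((c : Γ) : G)) * x) = Φ (((c : Γ))⁻¹ * σ) x := by
    intro c σ x
    have hmem : (((c : Γ) : G)) ∈ Hγ := Subgroup.mem_map.mpr ⟨(c : Γ), c.2, rfl⟩
    simp only [hΦdef]
    rw [hFc _ hmem x]
    congr 3
    push_cast
    group
  -- support considerations
  have hKcomp : IsCompact (tsupport h * tsupport f * (tsupport h)⁻¹) :=
    (hhsupp.mul hfsupp).mul hhsupp.inv
  have hPK : ∀ σ : Γ, (∃ x, Φ σ x ≠ 0) →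
      ((σ⁻¹ * γ * σ : Γ) : G) ∈ tsupport h * tsupport f * (tsupport h)⁻¹ := by
    rintro σ ⟨x, hx⟩
    have h1 : h (((σ : G))⁻¹ * x) ≠ 0 := fun h0 => hx (by simp [hΦdef, h0])
    have h2 : f (x⁻¹ * (γ : G) * x) ≠ 0 := fun h0 => hx (by simp [hΦdef, hFdef, h0])
    have m1 : ((σ : G))⁻¹ * x ∈ tsupport h := subset_tsupport _ h1
    have m2 : x⁻¹ * (γ : G) * x ∈ tsupport f := subset_tsupport _ h2
    have key : ((σ⁻¹ * γ * σ : Γ) : G)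
        = (((σ : G))⁻¹ * x) * (x⁻¹ * (γ : G) * x) * ((((σ : G))⁻¹ * x))⁻¹ := by
      push_cast; group
    rw [key]
    exact Set.mul_mem_mul (Set.mul_mem_mul m1 m2) (Set.inv_mem_inv.mpr m1)
  have hfinK : ∀ K : Set G, IsCompact K → {δ : Γ | (δ : G) ∈ K}.Finite := by
    intro K hK
    have ht := Γ.tendsto_coe_cofinite_of_discrete (SetLike.isDiscrete_iff_discreteTopology.mpr inferInstance)
    have hmem : Kᶜ ∈ Filter.cocompact G := Filter.mem_cocompact'.mpr ⟨K, hK, (compl_compl K).subset⟩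
    have hfin : (((↑) : Γ → G) ⁻¹' Kᶜ) ∈ Filter.cofinite := ht hmem
    rw [Filter.mem_cofinite] at hfin
    simp [Set.preimage_compl, compl_compl] at hfin
    exact hfin
  have hinjS : ∀ σ₁ ∈ S, ∀ σ₂ ∈ S, σ₁⁻¹ * γ * σ₁ = σ₂⁻¹ * γ * σ₂ → σ₁ = σ₂ := by
    intro σ₁ h1 σ₂ h2 heq
    have hcmem : σ₂ * σ₁⁻¹ ∈ Cγ := by
      rw [hCγdef, Subgroup.mem_centralizer_singleton_iff]
      have h3 : σ₂ * (σ₁⁻¹ * γ * σ₁) * σ₁⁻¹ = σ₂ * (σ₂⁻¹ * γ * σ₂) * σ₁⁻¹ := by rw [heq]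
      have l : σ₂ * (σ₁⁻¹ * γ * σ₁) * σ₁⁻¹ = σ₂ * σ₁⁻¹ * γ := by group
      have r : σ₂ * (σ₂⁻¹ * γ * σ₂) * σ₁⁻¹ = γ * (σ₂ * σ₁⁻¹) := by group
      rw [l, r] at h3
      exact h3
    have hone' : σ₁ * σ₁⁻¹ ∈ Cγ := by
      have : σ₁ * σ₁⁻¹ = 1 := by group
      rw [this]; exact Cγ.one_mem
    exact ((hS σ₁).unique ⟨h2, hcmem⟩ ⟨h1, hone'⟩).symm
  have hTfin : {σ : Γ | σ ∈ S ∧ ∃ x, Φ σ x ≠ 0}.Finite := by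
    have himg : ((fun σ : Γ => σ⁻¹ * γ * σ) '' {σ : Γ | σ ∈ S ∧ ∃ x, Φ σ x ≠ 0}).Finite := by
      apply (hfinK _ hKcomp).subset
      rintro _ ⟨σ, ⟨hσS, hσx⟩, rfl⟩
      exact hPK σ hσx
    exact Set.Finite.of_finite_image himg
      (fun σ₁ h1 σ₂ h2 h12 => hinjS σ₁ h1.1 σ₂ h2.1 h12)
  have hSfin2 : {σ : ↥S | ∃ x, Φ (↑σ) x ≠ 0}.Finite := by
    have hpre := hTfin.preimage (f := ((↑) : ↥S → Γ)) Subtype.coe_injective.injOn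
    apply hpre.subset
    intro σ hσ
    exact ⟨σ.2, hσ⟩
  -- the coset-decomposition bijection
  have eBij : Function.Bijective
      (fun p : (↥S) × (↥Cγ) => ((p.2 : Γ))⁻¹ * ((p.1 : Γ))) := by
    constructor
    · rintro ⟨σ₁, c₁⟩ ⟨σ₂, c₂⟩ hp
      simp only at hp
      have h1 : (σ₁ : Γ) * (((c₁ : Γ))⁻¹ * (σ₁ : Γ))⁻¹ ∈ Cγ := by
        have hh1 : (σ₁ : Γ) * (((c₁ : Γ))⁻¹ * (σ₁ : Γ))⁻¹ = (c₁ : Γ) := by group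
        rw [hh1]; exact c₁.2
      have h2 : (σ₂ : Γ) * (((c₁ : Γ))⁻¹ * (σ₁ : Γ))⁻¹ ∈ Cγ := by
        rw [hp]
        have hh2 : (σ₂ : Γ) * (((c₂ : Γ))⁻¹ * (σ₂ : Γ))⁻¹ = (c₂ : Γ) := by group
        rw [hh2]; exact c₂.2
      have hσeq : (σ₁ : Γ) = (σ₂ : Γ) :=
        (hS (((c₁ : Γ))⁻¹ * (σ₁ : Γ))).unique ⟨σ₁.2, h1⟩ ⟨σ₂.2, h2⟩
      have hceq : (c₁ : Γ) = (c₂ : Γ) := by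
        rw [hσeq] at hp
        have := mul_right_cancel hp
        exact inv_injective this
      exact Prod.ext (Subtype.ext hσeq) (Subtype.ext hceq)
    · intro δ
      obtain ⟨σ, ⟨hσS, hσC⟩, -⟩ := hS δ
      refine ⟨⟨⟨σ, hσS⟩, ⟨σ * δ⁻¹, hσC⟩⟩, ?_⟩
      show (σ * δ⁻¹)⁻¹ * σ = δ
      group
  let e : (↥S) × (↥Cγ) ≃ Γ := Equiv.ofBijective _ eBij
  -- lintegral bookkeeping
  set q : Γ → ℝ≥0∞ := fun δ => ∫⁻ x in Fγ, (‖Φ δ x‖₊ : ℝ≥0∞) ∂μ with hqdef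
  have unfoldL : ∀ σ : Γ,
      ∫⁻ x, (‖Φ σ x‖₊ : ℝ≥0∞) ∂μ = ∑' c : Cγ, q (((c : Γ))⁻¹ * σ) := by
    intro σ
    rw [hFγ.lintegral_eq_tsum'' (fun x => (‖Φ σ x‖₊ : ℝ≥0∞))]
    rw [← Equiv.tsum_eq eH.toEquiv
      (fun g : Hγ => ∫⁻ x in Fγ, (‖Φ σ (g • x)‖₊ : ℝ≥0∞) ∂μ)]
    refine tsum_congr fun c => ?_
    simp only [hqdef]
    refine lintegral_congr fun x => ?_
    rw [Submonoid.smul_def, hcoeH c, smul_eq_mul, ΦC c σ x]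
  have masterEq : (∑' δ : Γ, q δ) = ∑' σ : ↥S, ∫⁻ x, (‖Φ (↑σ) x‖₊ : ℝ≥0∞) ∂μ := by
    have h1 : (∑' p : (↥S) × (↥Cγ), q (e p)) = ∑' σ : ↥S, ∑' c : ↥Cγ, q (e (σ, c)) := by
      rw [← ENNReal.tsum_prod]
    rw [← Equiv.tsum_eq e q, h1]
    refine tsum_congr fun σ => ?_
    rw [unfoldL (↑σ)]
    exact tsum_congr fun c => rfl
  have masterFin : (∑' σ : ↥S, ∫⁻ x, (‖Φ (↑σ) x‖₊ : ℝ≥0∞) ∂μ) ≠ ⊤ := by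
    rw [tsum_eq_sum (s := hSfin2.toFinset) ?_]
    · refine (ENNReal.sum_lt_top.mpr fun σ _ => ?_).ne
      exact (hPhiInt (↑σ)).2
    · intro σ hσ
      have hz : ∀ x, Φ (↑σ) x = 0 := by
        intro x; by_contra hx
        exact hσ (hSfin2.mem_toFinset.mpr ⟨x, hx⟩)
      simp [hz]
  have qFin : (∑' δ : Γ, q δ) ≠ ⊤ := by rw [masterEq]; exact masterFin
  -- the partition of unity, reindexed by inverses
  have hone : ∀ x : G, ∑' δ : Γ, h (((δ : G))⁻¹ * x) = 1 := by
    intro x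
    refine Eq.trans ?_ (hhsum x).2
    refine Eq.trans ?_ ((Equiv.inv Γ).tsum_eq (fun δ : Γ => h (((δ : G)) * x)))
    refine tsum_congr fun δ => ?_
    simp
  have honeSummable : ∀ x : G, Summable (fun δ : Γ => h (((δ : G))⁻¹ * x)) := by
    intro x
    have hfin : {δ : Γ | h (((δ : G))⁻¹ * x) ≠ 0}.Finite := by
      have himg := (hhsum x).1.image (fun δ : Γ => δ⁻¹)
      apply himg.subset
      intro δ hδ
      refine ⟨δ⁻¹, ?_, by simp⟩
      simpa using hδ
    refine summable_of_ne_finset_zero (s := hfin.toFinset) fun δ hδ => ?_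
    by_contra hne
    exact hδ (hfin.mem_toFinset.mpr hne)
  have pointwiseC : ∀ x : G, ∑' δ : Γ, Φ δ x = F x := by
    intro x
    have hsplit : ∑' δ : Γ, Φ δ x
        = (∑' δ : Γ, ((h (((δ : G))⁻¹ * x) : ℝ) : ℂ)) * F x := by
      simp only [hΦdef]
      exact tsum_mul_right
    rw [hsplit, ← Complex.ofReal_tsum, hone x]
    simp
  -- Bochner unfolding
  have unfoldB : ∀ σ : Γ,
      ∫ x, Φ σ x ∂μ = ∑' c : Cγ, ∫ x in Fγ, Φ (((c : Γ))⁻¹ * σ) x ∂μ := by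
    intro σ
    rw [hFγ.integral_eq_tsum'' (Φ σ) (hPhiInt σ)]
    rw [← Equiv.tsum_eq eH.toEquiv
      (fun g : Hγ => ∫ x in Fγ, Φ σ (g • x) ∂μ)]
    refine tsum_congr fun c => ?_
    refine integral_congr_ae (Filter.Eventually.of_forall fun x => ?_)
    show Φ σ (eH.toEquiv c • x) = Φ (((c : Γ))⁻¹ * σ) x
    rw [Submonoid.smul_def, hcoeH c, smul_eq_mul, ΦC c σ x]
  have normb : ∀ δ : Γ, ‖∫ x in Fγ, Φ δ x ∂μ‖ ≤ (q δ).toReal := by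
    intro δ
    have h1 := norm_integral_le_lintegral_norm (μ := μ.restrict Fγ) (Φ δ)
    simp only [hqdef]
    refine h1.trans (le_of_eq ?_)
    congr 1
    refine lintegral_congr fun x => ?_
    simp only [ofReal_norm, enorm_eq_nnnorm]
  have bSummable : Summable (fun p : (↥S) × (↥Cγ) => ∫ x in Fγ, Φ (e p) x ∂μ) := by
    refine Summable.of_norm_bounded (g := fun p => (q (e p)).toReal)
      (ENNReal.summable_toReal ?_) (fun p => normb (e p))
    rw [Equiv.tsum_eq e q]
    exact qFin
  have B3 : (∑' σ : ↥S, ∫ x, Φ (↑σ) x ∂μ) = ∫ x in Fγ, F x ∂μ := by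
    have step : (∑' σ : ↥S, ∫ x, Φ (↑σ) x ∂μ)
        = ∑' p : (↥S) × (↥Cγ), ∫ x in Fγ, Φ (e p) x ∂μ := by
      have hrow : ∀ σ : ↥S, Summable fun c : ↥Cγ => ∫ x in Fγ, Φ (e (σ, c)) x ∂μ := by
        intro σ
        refine Summable.of_norm_bounded (g := fun c => (q (e (σ, c))).toReal)
          (ENNReal.summable_toReal ?_) (fun c => normb (e (σ, c)))
        have hfin : (∑' c : ↥Cγ, q (((c : Γ))⁻¹ * ((σ : Γ)))) ≠ ⊤ := by
          rw [← unfoldL (↑σ)]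
          exact (hPhiInt (↑σ)).2.ne
        exact hfin
      rw [Summable.tsum_prod' bSummable hrow]
      exact tsum_congr fun σ => (unfoldB (↑σ)).trans (tsum_congr fun c => rfl)
    rw [step, Equiv.tsum_eq e (fun δ => ∫ x in Fγ, Φ δ x ∂μ)]
    have hit := integral_tsum (μ := μ.restrict Fγ) (f := fun δ : Γ => Φ δ)
      (fun δ => (hPhiInt δ).aestronglyMeasurable.restrict) (by exact qFin)
    rw [← hit]
    exact integral_congr_ae (Filter.Eventually.of_forall fun x => pointwiseC x)
  have B2 : Summable (fun σ : ↥S => ∫ x, ‖Φ (↑σ) x‖ ∂μ) := by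
    refine summable_of_ne_finset_zero (s := hSfin2.toFinset) fun σ hσ => ?_
    have hz : ∀ x, Φ (↑σ) x = 0 := fun x => by
      by_contra hx
      exact hσ (hSfin2.mem_toFinset.mpr ⟨x, hx⟩)
    simp [hz]
  -- change of variables
  have CVeq : ∀ σ : Γ, (fun x : G => (h x : ℂ) * f (x⁻¹ * ((σ⁻¹ * γ * σ : Γ) : G) * x))
      = fun x => Φ σ (((σ : G)) * x) := by
    intro σ
    funext x
    simp only [hΦdef, hFdef]
    rw [inv_mul_cancel_left]
    congr 2
    push_cast
    group
  have jBij : Function.Bijective (fun σ : ↥S =>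
      (⟨((σ : Γ))⁻¹ * γ * (σ : Γ), isConj_iff.mpr ⟨((σ : Γ))⁻¹, by group⟩⟩ :
        {δ : Γ // IsConj γ δ})) := by
    constructor
    · intro σ₁ σ₂ hσ
      have hval := congrArg (fun t : {δ : Γ // IsConj γ δ} => (t : Γ)) hσ
      exact Subtype.ext (hinjS _ σ₁.2 _ σ₂.2 hval)
    · rintro ⟨δ, hδ⟩
      obtain ⟨c, hc⟩ := isConj_iff.mp hδ
      obtain ⟨σ, ⟨hσS, hσC⟩, -⟩ := hS c⁻¹
      refine ⟨⟨σ, hσS⟩, Subtype.ext ?_⟩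
      show σ⁻¹ * γ * σ = δ
      have hcomm : σ * c * γ = γ * (σ * c) := by
        have h' := Subgroup.mem_centralizer_singleton_iff.mp hσC
        simpa using h'
      rw [← hc]
      have h3 : σ⁻¹ * (σ * c * γ) * c⁻¹ = σ⁻¹ * (γ * (σ * c)) * c⁻¹ := by rw [hcomm]
      have l : σ⁻¹ * (σ * c * γ) * c⁻¹ = c * γ * c⁻¹ := by group
      have r : σ⁻¹ * (γ * (σ * c)) * c⁻¹ = σ⁻¹ * γ * σ := by group
      rw [l, r] at h3
      exact h3.symm
  let j : ↥S ≃ {δ : Γ // IsConj γ δ} := Equiv.ofBijective _ jBij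
  have B5 : (∑' δ : {δ : Γ // IsConj γ δ}, ∫ x,
      (h x : ℂ) * f (x⁻¹ * ((δ : Γ) : G) * x) ∂μ) = ∫ x in Fγ, F x ∂μ := by
    rw [← Equiv.tsum_eq j (fun δ : {δ : Γ // IsConj γ δ} =>
      ∫ x, (h x : ℂ) * f (x⁻¹ * ((δ : Γ) : G) * x) ∂μ)]
    rw [← B3]
    refine tsum_congr fun σ => ?_
    have hj : ((j σ : {δ : Γ // IsConj γ δ}) : Γ) = ((σ : Γ))⁻¹ * γ * (σ : Γ) := rfl
    rw [hj]
    calc ∫ x, (h x : ℂ) * f (x⁻¹ * (((((σ : Γ))⁻¹ * γ * (σ : Γ)) : Γ) : G) * x) ∂μ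
        = ∫ x, Φ (↑σ) ((((σ : Γ) : G)) * x) ∂μ := by rw [CVeq (↑σ)]
      _ = ∫ x, Φ (↑σ) x ∂μ := integral_mul_left_eq_self _ _
  have B4 : Summable (fun δ : {δ : Γ // IsConj γ δ} => ∫ x, ‖
      ((h x : ℂ) * f (x⁻¹ * ((δ : Γ) : G) * x))‖ ∂μ) := by
    rw [← Equiv.summable_iff j]
    have hcomp : ((fun δ : {δ : Γ // IsConj γ δ} => ∫ x, ‖
        ((h x : ℂ) * f (x⁻¹ * ((δ : Γ) : G) * x))‖ ∂μ) ∘ j)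
        = fun σ : ↥S => ∫ x, ‖Φ (↑σ) x‖ ∂μ := by
      funext σ
      have h1 : (fun x : G => ‖(h x : ℂ) *
          f (x⁻¹ * (((((σ : Γ))⁻¹ * γ * (σ : Γ)) : Γ) : G) * x)‖)
          = fun x => ‖Φ (↑σ) ((((σ : Γ) : G)) * x)‖ := by
        funext x
        exact congrArg norm (congrFun (CVeq (↑σ)) x)
      show ∫ x, ‖(h x : ℂ) *
          f (x⁻¹ * (((((σ : Γ))⁻¹ * γ * (σ : Γ)) : Γ) : G) * x)‖ ∂μ
          = ∫ x, ‖Φ (↑σ) x‖ ∂μ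
      rw [h1]
      exact integral_mul_left_eq_self (fun x => ‖Φ (↑σ) x‖) _
    rw [hcomp]
    exact B2
  exact ⟨hPhiInt, B2, B3, B4, B5⟩
end
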